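/- arXiv:0709.2646 — 2 statements merged into one kernel-verified Lean document; each statement's English description precedes it below -/
import Mathlib

section
/- Let P be a finite poset on [n], let P_s = P ∪ {s} be the poset on {s} ∪ [n] obtained by adding an element s incomparable to all elements of [n], and let λ = (λ_s, λ_1, ..., λ_n) ∈ ℝ^{n+1}_{>0}. Let Q be any partial order on {s} ∪ [n] refining P_s. Then the probability that a CT-CBN sample from P_s is compatible with Q is ∫_{{t ∈ ℝ^{n+1}_{>0} : t compatible with Q}} f_{P_s,λ}(t) dt = λ_s λ_1 ⋯ λ_n · Σ_{C ∈ 𝒞(J(Q))} ∏_{k=0}^{n} 1/λ_{Exit(C_k)}, where the sum runs over all maximal chains C = (C_0, ..., C_{n+1}) in the distributive lattice J(Q) of order ideals of Q, and Exit is taken with respect to P_s. -/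
open MeasureTheory

/-- The poset `P_s = P ∪ {s}` on `{s} ∪ [n]`, modeled on `Option (Fin n)` with `s = none`:
the element `s` is incomparable to all others, and `P` is kept on `[n]`. -/
def liftRel {n : ℕ} (P : Fin n → Fin n → Prop) :
    Option (Fin n) → Option (Fin n) → Prop
  | some i, some j => P i j
  | _, _ => False

/-- The maximum of `t` over the strict predecessors of `a`, with the convention that the
maximum over the empty set is `0`. -/
noncomputable def maxPa {α : Type*} (R : α → α → Prop) (t : α → ℝ) (a : α) : ℝ :=
  sSup (insert 0 (t '' {b | R b a}))

/-- The CT-CBN density `f_{P_s,λ}` on `ℝ^{{s}∪[n]}`. -/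
noncomputable def ctcbnDensity {α : Type*} [Fintype α] (R : α → α → Prop) (lam : α → ℝ)
    (t : α → ℝ) : ℝ :=
  if ∀ a, maxPa R t a < t a then
    ∏ a, lam a * Real.exp (-(lam a) * (t a - maxPa R t a))
  else 0

/-- `S` is an order ideal (lower set) of the strict order `R`. -/
def IsOrderIdeal {α : Type*} (R : α → α → Prop) (S : Finset α) : Prop :=
  ∀ p q : α, R p q → q ∈ S → p ∈ S

open scoped Classical in
/-- `Exit(S)`: the events not in `S` that can occur next with respect to `R`. -/
noncomputable def exitSet {α : Type*} [Fintype α] (R : α → α → Prop) (S : Finset α) :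
    Finset α :=
  Finset.univ.filter (fun j => j ∉ S ∧ IsOrderIdeal R (insert j S))

/-- `λ_T = Σ_{j ∈ T} λ_j`. -/
def rateSum {α : Type*} (lam : α → ℝ) (T : Finset α) : ℝ := ∑ j ∈ T, lam j

/-- A maximal chain `∅ = C_0 ⊂ ⋯ ⊂ C_{n+1} = {s} ∪ [n]` in the lattice `J(Q)` of order
ideals of a partial order `Q` on `{s} ∪ [n]`. -/
def IsMaxChainJ {n : ℕ} (Q : Option (Fin n) → Option (Fin n) → Prop)
    (C : Fin (n + 2) → Finset (Option (Fin n))) : Prop :=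
  (∀ k, IsOrderIdeal Q (C k)) ∧ (∀ k : Fin (n + 2), (C k).card = (k : ℕ)) ∧
  (∀ k : Fin (n + 1), C k.castSucc ⊆ C k.succ)

open scoped Classical in
/-- The (finite) set `𝒞(J(Q))` of maximal chains in `J(Q)`. -/
noncomputable def maxChainsJ {n : ℕ} (Q : Option (Fin n) → Option (Fin n) → Prop) :
    Finset (Fin (n + 2) → Finset (Option (Fin n))) :=
  Finset.univ.filter (fun C => IsMaxChainJ Q C)

/-!
Almost every `t` has pairwise distinct coordinates, and such a `t` lies in exactly one cone
`t_{σ 0} < ⋯ < t_{σ n}`, where `σ` is an ordering of `{s} ∪ [n]`; `t` is compatible with `Q`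
iff `σ` is a linear extension of `Q`, and linear extensions of `Q` are the same as maximal
chains of `J(Q)` (take the prefixes `C_k` of `σ`). On the cone of `σ`, pass to the waiting times
`u_k = t_{σ k} - t_{σ (k-1)}`, a volume preserving shear onto the positive orthant. Each event
`a` waits from the latest of its parents until itself, so `t_a - max_{pa(a)} t` is the sum of
the `u_k` with `a ∈ Exit(C_k)`. The density thus becomes
`∏ λ · exp (-∑_k λ_{Exit(C_k)} u_k)`, whose integral over the orthant is
`∏ λ · ∏_k 1/λ_{Exit(C_k)}`.
-/

open Finset

section LinearExtensions

variable {α : Type*} [Fintype α] {m : ℕ} {R Q : α → α → Prop}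

def prefixChain (σ : Fin m ≃ α) (j : Fin (m + 1)) : Finset α :=
  univ.filter fun a => (σ.symm a : ℕ) < j

@[simp]
lemma mem_prefixChain {σ : Fin m ≃ α} {j : Fin (m + 1)} {a : α} :
    a ∈ prefixChain σ j ↔ (σ.symm a : ℕ) < j := by
  simp [prefixChain]

lemma card_prefixChain (σ : Fin m ≃ α) (j : Fin (m + 1)) : (prefixChain σ j).card = j := by
  have : prefixChain σ j = (univ.filter fun k : Fin m => (k : ℕ) < j).map σ.toEmbedding := by
    ext a
    simp
  rw [this, card_map, Fin.card_filter_val_lt]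
  omega

lemma prefixChain_injective : Function.Injective (prefixChain (α := α) (m := m)) := by
  intro σ τ h
  have hrank : ∀ a, (σ.symm a : ℕ) = τ.symm a := fun a => by
    have h₁ := congrArg (a ∈ ·) (congrFun h ⟨σ.symm a + 1, by omega⟩)
    have h₂ := congrArg (a ∈ ·) (congrFun h ⟨τ.symm a + 1, by omega⟩)
    simp only [mem_prefixChain, eq_iff_iff] at h₁ h₂
    omega
  simpa using congrArg Equiv.symm (Equiv.ext fun a => Fin.ext (hrank a))

lemma exists_prefixChain_eq [DecidableEq α] (hα : Fintype.card α = m)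
    {C : Fin (m + 1) → Finset α} (hcard : ∀ j, (C j).card = j)
    (hsub : ∀ k : Fin m, C k.castSucc ⊆ C k.succ) :
    ∃ σ, prefixChain σ = C := by
  have hmono : Monotone C := Fin.monotone_iff_le_succ.2 hsub
  have hstep : ∀ k : Fin m, ∃ a, C k.succ \ C k.castSucc = {a} := fun k =>
    card_eq_one.1 (by rw [card_sdiff_of_subset (hsub k), hcard, hcard]; simp)
  choose f hf using hstep
  have hnew : ∀ k, f k ∈ C k.succ ∧ f k ∉ C k.castSucc := fun k =>
    mem_sdiff.1 (hf k ▸ mem_singleton_self _)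
  have hmem : ∀ k j, f k ∈ C j ↔ (k : ℕ) < j := fun k j =>
    ⟨fun h => by_contra fun hle =>
      (hnew k).2 (hmono (Fin.le_def.2 (by rw [Fin.val_castSucc]; omega)) h),
      fun h => hmono (Fin.le_def.2 (by rw [Fin.val_succ]; omega)) (hnew k).1⟩
  have hinj : Function.Injective f := fun k l hkl => by
    have h := fun j => (hmem k j).symm.trans (hkl ▸ hmem l j)
    have h₁ := (h k.succ).1 (by simp)
    have h₂ := (h l.succ).2 (by simp)
    simp only [Fin.val_succ] at h₁ h₂
    omega
  let σ := Equiv.ofBijective f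
    ((Fintype.bijective_iff_injective_and_card f).2 ⟨hinj, by simp [hα]⟩)
  refine ⟨σ, funext fun j => Finset.ext fun a => ?_⟩
  rw [mem_prefixChain, ← hmem, show f (σ.symm a) = a from σ.apply_symm_apply a]

lemma mem_exitSet_iff {S : Finset α} (hR : ∀ a, ¬ R a a) (hS : IsOrderIdeal R S) (a : α) :
    a ∈ exitSet R S ↔ a ∉ S ∧ ∀ b, R b a → b ∈ S := by
  classical
  simp only [exitSet, mem_filter, mem_univ, true_and, and_congr_right_iff]
  refine fun _ => ⟨fun hins b hb => ?_, fun hpa p q hpq hq => ?_⟩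
  · rcases mem_insert.1 (hins b a hb (mem_insert_self a S)) with rfl | h
    exacts [absurd hb (hR b), h]
  · rcases mem_insert.1 hq with rfl | hq
    exacts [mem_insert_of_mem (hpa p hpq), mem_insert_of_mem (hS p q hpq hq)]

open scoped Classical in
noncomputable def linearExtensions [DecidableEq α] (R : α → α → Prop) :
    Finset (Fin m ≃ α) :=
  univ.filter fun σ => ∀ a b, R a b → σ.symm a < σ.symm b

variable [DecidableEq α] {σ : Fin m ≃ α}

lemma mem_linearExtensions :
    σ ∈ linearExtensions R ↔ ∀ a b, R a b → σ.symm a < σ.symm b := by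
  simp [linearExtensions]

lemma linearExtensions_subset (hRQ : ∀ a b, R a b → Q a b) :
    linearExtensions (m := m) Q ⊆ linearExtensions R := fun _ hσ =>
  mem_linearExtensions.2 fun a b hab => mem_linearExtensions.1 hσ a b (hRQ a b hab)

lemma irrefl_of_mem_linearExtensions (hσ : σ ∈ linearExtensions R) (a : α) : ¬ R a a :=
  fun h => lt_irrefl _ (mem_linearExtensions.1 hσ a a h)

lemma isOrderIdeal_prefixChain (hσ : σ ∈ linearExtensions R) (j : Fin (m + 1)) :
    IsOrderIdeal R (prefixChain σ j) := fun a b hab hb => by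
  have := mem_linearExtensions.1 hσ a b hab
  rw [mem_prefixChain, Fin.lt_def] at *
  omega

lemma mem_linearExtensions_of_isOrderIdeal (hR : ∀ a, ¬ R a a)
    (h : ∀ j, IsOrderIdeal R (prefixChain σ j)) : σ ∈ linearExtensions R := by
  refine mem_linearExtensions.2 fun a b hab => ?_
  have ha := h ⟨σ.symm b + 1, by omega⟩ a b hab (by simp)
  have hne : σ.symm a ≠ σ.symm b := fun h => hR a (σ.symm.injective h ▸ hab)
  rw [mem_prefixChain, Fin.val_mk] at ha
  exact lt_of_le_of_ne (Fin.le_def.2 (Nat.lt_add_one_iff.1 ha)) hne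

lemma mem_exitSet_prefixChain (hσ : σ ∈ linearExtensions R) (j : Fin (m + 1)) (a : α) :
    a ∈ exitSet R (prefixChain σ j) ↔
      (j : ℕ) ≤ σ.symm a ∧ ∀ b, R b a → (σ.symm b : ℕ) < j := by
  simp [mem_exitSet_iff (irrefl_of_mem_linearExtensions hσ) (isOrderIdeal_prefixChain hσ j)]

lemma apply_mem_exitSet_prefixChain (hσ : σ ∈ linearExtensions R) (k : Fin m) :
    σ k ∈ exitSet R (prefixChain σ k.castSucc) := by
  rw [mem_exitSet_prefixChain hσ]
  refine ⟨by simp, fun b hb => ?_⟩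
  simpa using mem_linearExtensions.1 hσ b (σ k) hb

end LinearExtensions

lemma mem_maxChainsJ {n : ℕ} {Q : Option (Fin n) → Option (Fin n) → Prop}
    {C : Fin (n + 2) → Finset (Option (Fin n))} : C ∈ maxChainsJ Q ↔ IsMaxChainJ Q C := by
  simp [maxChainsJ]

lemma maxChainsJ_eq_image {n : ℕ} {Q : Option (Fin n) → Option (Fin n) → Prop}
    (hQ : ∀ a, ¬ Q a a) : maxChainsJ Q = (linearExtensions Q).image prefixChain := by
  ext C
  rw [mem_maxChainsJ, IsMaxChainJ, mem_image]
  constructor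
  · rintro ⟨hideal, hcard, hsub⟩
    obtain ⟨σ, rfl⟩ := exists_prefixChain_eq (by simp) hcard hsub
    exact ⟨σ, mem_linearExtensions_of_isOrderIdeal hQ hideal, rfl⟩
  · rintro ⟨σ, hσ, rfl⟩
    refine ⟨isOrderIdeal_prefixChain hσ, card_prefixChain σ, fun k a ha => ?_⟩
    simp only [mem_prefixChain, Fin.val_castSucc, Fin.val_succ] at ha ⊢
    omega

section CumulativeTimes

variable {m : ℕ}

def prefixSum (u : Fin m → ℝ) (j : ℕ) : ℝ :=
  ∑ k ∈ univ.filter fun k : Fin m => (k : ℕ) < j, u k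

lemma prefixSum_zero (u : Fin m → ℝ) : prefixSum u 0 = 0 := by
  simp [prefixSum]

lemma prefixSum_succ (u : Fin m → ℝ) (k : Fin m) :
    prefixSum u (k + 1) = prefixSum u k + u k := by
  have : (univ.filter fun l : Fin m => (l : ℕ) < k + 1) =
      insert k (univ.filter fun l : Fin m => (l : ℕ) < k) := by
    ext l
    simp [le_iff_eq_or_lt, Fin.val_inj]
  rw [prefixSum, this, sum_insert (by simp), add_comm, prefixSum]

lemma prefixSum_mono {u : Fin m → ℝ} (hu : ∀ k, 0 ≤ u k) : Monotone (prefixSum u) :=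
  fun _ _ hij => sum_le_sum_of_subset_of_nonneg
    (monotone_filter_right _ fun _ _ h => lt_of_lt_of_le h hij) fun k _ _ => hu k

lemma prefixSum_lt_prefixSum {u : Fin m → ℝ} (hu : ∀ k, 0 < u k) {i j : ℕ} (hij : i < j)
    (hi : i < m) : prefixSum u i < prefixSum u j :=
  sum_lt_sum_of_subset (monotone_filter_right _ fun _ _ h => h.trans hij)
    (i := ⟨i, hi⟩) (by simpa) (by simp) (hu _) fun k _ _ => (hu k).le

lemma prefixSum_sub_prefixSum (u : Fin m → ℝ) {i j : ℕ} (hij : i ≤ j) :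
    prefixSum u j - prefixSum u i =
      ∑ k ∈ univ.filter fun k : Fin m => i ≤ k ∧ k < j, u k := by
  rw [sub_eq_iff_eq_add', prefixSum, prefixSum, ← sum_union]
  · congr 1
    ext k
    simp only [mem_union, mem_filter, mem_univ, true_and]
    omega
  · exact disjoint_filter.2 fun _ _ h h' => by omega

def lowerTriangularOnes (m : ℕ) : Matrix (Fin m) (Fin m) ℝ :=
  Matrix.of fun k j => if j ≤ k then 1 else 0

lemma det_lowerTriangularOnes : (lowerTriangularOnes m).det = 1 := by
  rw [Matrix.det_of_isLowerTriangular (lowerTriangularOnes m) fun k j h => if_neg (not_le.2 h)]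
  simp [lowerTriangularOnes]

noncomputable def partialSums (m : ℕ) : (Fin m → ℝ) ≃ₗ[ℝ] (Fin m → ℝ) :=
  (lowerTriangularOnes m).toLinearEquiv' <| (lowerTriangularOnes m).invertibleOfIsUnitDet <| by
    rw [det_lowerTriangularOnes]
    exact isUnit_one

lemma partialSums_apply (u : Fin m → ℝ) (k : Fin m) :
    partialSums m u k = prefixSum u (k + 1) := by
  change Matrix.toLin' (lowerTriangularOnes m) u k = _
  simp only [Matrix.toLin'_apply, Matrix.mulVec, dotProduct, lowerTriangularOnes,
    Matrix.of_apply, ite_mul, one_mul, zero_mul, prefixSum, sum_filter, Fin.le_def,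
    Nat.lt_succ_iff]

lemma measurePreserving_partialSums : MeasurePreserving (partialSums m) := by
  have hdet : LinearMap.det (partialSums m : (Fin m → ℝ) →ₗ[ℝ] Fin m → ℝ) = 1 := by
    rw [partialSums, Matrix.toLinearEquiv'_apply, LinearMap.det_toLin', det_lowerTriangularOnes]
  refine ⟨(partialSums m).toContinuousLinearEquiv.continuous.measurable, ?_⟩
  rw [← LinearEquiv.coe_coe, Real.map_linearMap_volume_pi_eq_smul_volume_pi (by simp [hdet]),
    hdet]
  simp

variable {α : Type*}

/-- `u k` is the waiting time between the `k`-th and the `(k+1)`-st event in the order `σ`. -/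
noncomputable def cumulativeTimes (σ : Fin m ≃ α) : (Fin m → ℝ) ≃ᵐ (α → ℝ) :=
  (partialSums m).toContinuousLinearEquiv.toHomeomorph.toMeasurableEquiv.trans
    (MeasurableEquiv.piCongrLeft (fun _ => ℝ) σ)

lemma cumulativeTimes_apply (σ : Fin m ≃ α) (u : Fin m → ℝ) (a : α) :
    cumulativeTimes σ u a = prefixSum u (σ.symm a + 1) := by
  obtain ⟨k, rfl⟩ := σ.surjective a
  simp [cumulativeTimes, MeasurableEquiv.coe_piCongrLeft, partialSums_apply]

lemma measurePreserving_cumulativeTimes [Fintype α] (σ : Fin m ≃ α) :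
    MeasurePreserving (cumulativeTimes σ) :=
  (volume_measurePreserving_piCongrLeft (fun _ => ℝ) σ).comp measurePreserving_partialSums

end CumulativeTimes

section SortedRegion

variable {α : Type*} {m : ℕ}

def sortedRegion (σ : Fin m ≃ α) : Set (α → ℝ) :=
  {t | StrictMono (t ∘ σ) ∧ ∀ a, 0 < t a}

lemma preimage_cumulativeTimes_sortedRegion (σ : Fin m ≃ α) :
    cumulativeTimes σ ⁻¹' sortedRegion σ = Set.univ.pi fun _ => Set.Ioi 0 := by
  ext u
  have happ : ∀ k, cumulativeTimes σ u (σ k) = prefixSum u (k + 1) := fun k => by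
    rw [cumulativeTimes_apply, σ.symm_apply_apply]
  simp only [Set.mem_preimage, sortedRegion, Set.mem_ofPred_eq, Set.mem_univ_pi, Set.mem_Ioi,
    σ.symm.forall_congr_left (p := fun a => 0 < cumulativeTimes σ u a), Equiv.symm_symm,
    StrictMono, Function.comp_apply, happ]
  constructor
  · rintro ⟨hmono, hpos⟩ k
    have hsucc := prefixSum_succ u k
    rcases hk : (k : ℕ) with _ | i
    · have := hpos k
      rw [hk, prefixSum_zero] at hsucc
      rw [hk] at this
      linarith
    · have := hmono (a := ⟨i, by omega⟩) (b := k) (Fin.lt_def.2 (by simp [hk]))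
      rw [hk] at hsucc this
      linarith
  · intro hu
    refine ⟨fun k l hkl => prefixSum_lt_prefixSum hu (by simpa) (by omega), fun k => ?_⟩
    simpa [prefixSum_zero] using prefixSum_lt_prefixSum hu (i := 0) (j := k + 1) (by omega) k.pos

lemma measurableSet_sortedRegion [Fintype α] (σ : Fin m ≃ α) :
    MeasurableSet (sortedRegion σ) := by
  rw [← (cumulativeTimes σ).measurableSet_preimage, preimage_cumulativeTimes_sortedRegion]
  exact MeasurableSet.univ_pi fun _ => measurableSet_Ioi

lemma eq_of_mem_sortedRegion {σ τ : Fin m ≃ α} {t : α → ℝ} (hσ : t ∈ sortedRegion σ)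
    (hτ : t ∈ sortedRegion τ) : σ = τ := by
  have hinj : Function.Injective t := fun x y hxy =>
    σ.symm.injective (hσ.1.injective (by simpa using hxy))
  have h : t ∘ σ = t ∘ τ := (hσ.1.range_inj hτ.1).1 (by simp [Set.range_comp])
  exact Equiv.ext fun k => hinj (congrFun h k)

lemma pairwise_disjoint_sortedRegion :
    Pairwise (Function.onFun Disjoint (sortedRegion (α := α) (m := m))) :=
  fun _ _ hne => Set.disjoint_left.2 fun _ h h' => hne (eq_of_mem_sortedRegion h h')

lemma exists_mem_sortedRegion [Fintype α] (hα : Fintype.card α = m) {t : α → ℝ}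
    (ht : Function.Injective t) (hpos : ∀ a, 0 < t a) :
    ∃ σ : Fin m ≃ α, t ∈ sortedRegion σ := by
  let e := (Fintype.equivFinOfCardEq hα).symm
  refine ⟨(Tuple.sort (t ∘ e)).trans e, ?_, hpos⟩
  exact (Tuple.monotone_sort (t ∘ e)).strictMono_of_injective
    ((ht.comp e.injective).comp (Tuple.sort (t ∘ e)).injective)

end SortedRegion

lemma ae_injective {α : Type*} [Fintype α] : ∀ᵐ t : α → ℝ, Function.Injective t := by
  classical
  refine ae_all_iff.2 fun a => ae_all_iff.2 fun b => ?_
  rcases eq_or_ne a b with rfl | hab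
  · exact .of_forall fun _ _ => rfl
  let L : (α → ℝ) →ₗ[ℝ] ℝ :=
    LinearMap.proj (R := ℝ) (φ := fun _ => ℝ) a - LinearMap.proj b
  have hL : LinearMap.ker L ≠ ⊤ := fun h => by
    have := LinearMap.mem_ker.1
      (h ▸ Submodule.mem_top : Pi.single a (1 : ℝ) ∈ LinearMap.ker L)
    simp [L, Pi.single_eq_of_ne' hab] at this
  refine measure_mono_null (fun t ht => ?_) (Measure.addHaar_submodule volume _ hL)
  have : t a = t b := (Classical.not_imp.1 ht).1
  simp [L, this]

section Density

variable {α : Type*} {m : ℕ} {R : α → α → Prop} {σ : Fin m ≃ α} {u : Fin m → ℝ}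

-- `p` is one more than the largest `σ`-position of a parent of `a`, or `0` if `a` has none.
lemma maxPa_cumulativeTimes (hu : ∀ k, 0 ≤ u k) {a : α} {p : ℕ}
    (hp : IsGreatest (insert 0 ((fun b => (σ.symm b : ℕ) + 1) '' {b | R b a})) p) :
    maxPa R (cumulativeTimes σ u) a = prefixSum u p := by
  have himage : insert 0 (cumulativeTimes σ u '' {b | R b a}) =
      prefixSum u '' insert 0 ((fun b => (σ.symm b : ℕ) + 1) '' {b | R b a}) := by
    rw [Set.image_insert_eq, prefixSum_zero, Set.image_image]
    simp only [cumulativeTimes_apply]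
  rw [maxPa, himage]
  exact ((prefixSum_mono hu).map_isGreatest hp).csSup_eq

lemma sub_maxPa_cumulativeTimes [Fintype α] [DecidableEq α] (hσ : σ ∈ linearExtensions R)
    (hu : ∀ k, 0 ≤ u k) (a : α) :
    cumulativeTimes σ u a - maxPa R (cumulativeTimes σ u) a =
      ∑ k ∈ univ.filter fun k : Fin m => a ∈ exitSet R (prefixChain σ k.castSucc), u k := by
  set S := insert 0 ((fun b => (σ.symm b : ℕ) + 1) '' {b | R b a})
  have hfin : S.Finite := ((Set.toFinite _).image _).insert 0
  have hp : IsGreatest S (sSup S) :=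
    ⟨(Set.insert_nonempty _ _).csSup_mem hfin, fun x hx => le_csSup hfin.bddAbove hx⟩
  have hS : ∀ k : ℕ, sSup S ≤ k ↔ ∀ b, R b a → (σ.symm b : ℕ) < k := fun k => by
    simp [isLUB_le_iff hp.isLUB, S, upperBounds_insert, mem_upperBounds]
  have hle : sSup S ≤ σ.symm a + 1 :=
    (hS _).2 fun b hb => (Fin.lt_def.1 (mem_linearExtensions.1 hσ b a hb)).trans (by omega)
  rw [maxPa_cumulativeTimes hu hp, cumulativeTimes_apply, prefixSum_sub_prefixSum u hle]
  congr 1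
  ext k
  simp only [mem_filter, mem_univ, true_and, mem_exitSet_prefixChain hσ, Fin.val_castSucc, hS,
    Nat.lt_add_one_iff, and_comm]

variable [Fintype α] [DecidableEq α]

lemma ctcbnDensity_cumulativeTimes (hσ : σ ∈ linearExtensions R) (lam : α → ℝ)
    (hu : ∀ k, 0 < u k) :
    ctcbnDensity R lam (cumulativeTimes σ u) =
      (∏ a, lam a) *
        ∏ k, Real.exp (-(rateSum lam (exitSet R (prefixChain σ k.castSucc)) * u k)) := by
  have hgap := sub_maxPa_cumulativeTimes hσ fun k => (hu k).le
  have hpos : ∀ a, maxPa R (cumulativeTimes σ u) a < cumulativeTimes σ u a := fun a =>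
    sub_pos.1 <| (hgap a).symm ▸ sum_pos (fun k _ => hu k)
      ⟨σ.symm a, by simpa using apply_mem_exitSet_prefixChain hσ (σ.symm a)⟩
  rw [ctcbnDensity, if_pos hpos, prod_mul_distrib, ← Real.exp_sum, ← Real.exp_sum]
  congr 2
  simp only [hgap, neg_mul, sum_neg_distrib, neg_inj, rateSum, mul_sum, sum_mul]
  exact sum_comm' (by simp)

lemma rateSum_exitSet_prefixChain_pos (hσ : σ ∈ linearExtensions R) {lam : α → ℝ}
    (hlam : ∀ a, 0 < lam a) (k : Fin m) :
    0 < rateSum lam (exitSet R (prefixChain σ k.castSucc)) :=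
  sum_pos (fun a _ => hlam a) ⟨σ k, apply_mem_exitSet_prefixChain hσ k⟩

end Density

section Orthant

variable {ι : Type*} [Fintype ι] {c : ι → ℝ}

lemma integral_pi_Ioi_prod_exp (hc : ∀ i, 0 < c i) :
    ∫ u in Set.univ.pi fun _ => Set.Ioi 0, ∏ i, Real.exp (-(c i * u i)) =
      ∏ i, (c i)⁻¹ := by
  rw [volume_pi, Measure.restrict_pi_pi,
    integral_fintype_prod_eq_prod (f := fun i x => Real.exp (-(c i * x)))]
  refine prod_congr rfl fun i _ => ?_
  simpa [neg_mul] using integral_exp_mul_Ioi (neg_neg_of_pos (hc i)) 0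

lemma integrableOn_pi_Ioi_prod_exp (hc : ∀ i, 0 < c i) :
    IntegrableOn (fun u : ι → ℝ => ∏ i, Real.exp (-(c i * u i)))
      (Set.univ.pi fun _ => Set.Ioi 0) := by
  rw [IntegrableOn, volume_pi, Measure.restrict_pi_pi]
  refine Integrable.fintype_prod (f := fun i x => Real.exp (-(c i * x))) fun i => ?_
  have h := integrableOn_exp_mul_Ioi (neg_neg_of_pos (hc i)) 0
  simp only [neg_mul] at h
  exact h

end Orthant

section Decomposition

variable {α : Type*} [Fintype α] [DecidableEq α] {m : ℕ} {R Q : α → α → Prop}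
  {σ : Fin m ≃ α} {lam : α → ℝ}

lemma integral_sortedRegion (hσ : σ ∈ linearExtensions R) (hlam : ∀ a, 0 < lam a) :
    ∫ t in sortedRegion σ, ctcbnDensity R lam t =
      (∏ a, lam a) *
        ∏ k : Fin m, (rateSum lam (exitSet R (prefixChain σ k.castSucc)))⁻¹ := by
  rw [← (measurePreserving_cumulativeTimes σ).setIntegral_preimage_emb
      (cumulativeTimes σ).measurableEmbedding, preimage_cumulativeTimes_sortedRegion,
    setIntegral_congr_fun (MeasurableSet.univ_pi fun _ => measurableSet_Ioi)
      fun u hu => ctcbnDensity_cumulativeTimes hσ lam fun k => hu k trivial,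
    integral_const_mul, integral_pi_Ioi_prod_exp (rateSum_exitSet_prefixChain_pos hσ hlam)]

lemma integrableOn_sortedRegion (hσ : σ ∈ linearExtensions R) (hlam : ∀ a, 0 < lam a) :
    IntegrableOn (ctcbnDensity R lam) (sortedRegion σ) := by
  rw [← (measurePreserving_cumulativeTimes σ).integrableOn_comp_preimage
      (cumulativeTimes σ).measurableEmbedding, preimage_cumulativeTimes_sortedRegion]
  refine IntegrableOn.congr_fun ((integrableOn_pi_Ioi_prod_exp
    (rateSum_exitSet_prefixChain_pos hσ hlam)).const_mul (∏ a, lam a)) (fun u hu => ?_)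
    (MeasurableSet.univ_pi fun _ => measurableSet_Ioi)
  exact (ctcbnDensity_cumulativeTimes hσ lam fun k => hu k trivial).symm

lemma sortedRegion_subset (hσ : σ ∈ linearExtensions Q) :
    sortedRegion σ ⊆ {t | (∀ a, 0 < t a) ∧ ∀ a b, Q a b → t a < t b} :=
  fun t ht => ⟨ht.2, fun a b hab => by simpa using ht.1 (mem_linearExtensions.1 hσ a b hab)⟩

lemma mem_linearExtensions_of_mem_sortedRegion {t : α → ℝ} (ht : t ∈ sortedRegion σ)
    (hQ : ∀ a b, Q a b → t a < t b) : σ ∈ linearExtensions Q :=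
  mem_linearExtensions.2 fun a b hab => ht.1.lt_iff_lt.1 (by simpa using hQ a b hab)

lemma compatibleSet_ae_eq_iUnion_sortedRegion (hα : Fintype.card α = m) :
    {t : α → ℝ | (∀ a, 0 < t a) ∧ ∀ a b, Q a b → t a < t b} =ᵐ[volume]
      ⋃ σ ∈ linearExtensions (m := m) Q, sortedRegion σ := by
  refine Filter.eventuallyEq_set.2 (ae_injective.mono fun t ht => ⟨fun h => ?_, fun h => ?_⟩)
  · obtain ⟨σ, hσ⟩ := exists_mem_sortedRegion hα ht h.1
    exact Set.mem_biUnion (mem_linearExtensions_of_mem_sortedRegion hσ h.2) hσ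
  · obtain ⟨σ, hσ, h⟩ := Set.mem_iUnion₂.1 h
    exact sortedRegion_subset hσ h

end Decomposition

theorem stmt11_general {n : ℕ} (P : Fin n → Fin n → Prop)
    (lam : Option (Fin n) → ℝ) (hlam : ∀ a, 0 < lam a)
    (Q : Option (Fin n) → Option (Fin n) → Prop)
    (hQirr : ∀ a, ¬ Q a a)
    (href : ∀ a b, liftRel P a b → Q a b) :
    (∫ t in {t : Option (Fin n) → ℝ | (∀ a, 0 < t a) ∧ ∀ a b, Q a b → t a < t b},
        ctcbnDensity (liftRel P) lam t) =
      (∏ a, lam a) *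
        ∑ C ∈ maxChainsJ Q,
          ∏ k : Fin (n + 1), (rateSum lam (exitSet (liftRel P) (C k.castSucc)))⁻¹ := by
  have hlin := linearExtensions_subset (m := n + 1) href
  rw [setIntegral_congr_set (compatibleSet_ae_eq_iUnion_sortedRegion (m := n + 1) (by simp)),
    integral_biUnion_finset _ (fun σ _ => measurableSet_sortedRegion σ)
      (pairwise_disjoint_sortedRegion.set_pairwise _)
      fun σ hσ => integrableOn_sortedRegion (hlin hσ) hlam,
    maxChainsJ_eq_image hQirr, sum_image prefixChain_injective.injOn, mul_sum]
  exact sum_congr rfl fun σ hσ => integral_sortedRegion (hlin hσ) hlam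

/-- The probability that a CT-CBN sample from `P_s` is compatible with a refinement `Q`:
`∫_{t compatible with Q} f_{P_s,λ}(t) dt
  = λ_s λ_1 ⋯ λ_n Σ_{C ∈ 𝒞(J(Q))} ∏_{k=0}^n 1/λ_{Exit(C_k)}`,
where `Exit` is taken with respect to `P_s`. -/
theorem stmt11 {n : ℕ} (P : Fin n → Fin n → Prop)
    (hirr : ∀ i, ¬ P i i) (htrans : ∀ i j k, P i j → P j k → P i k)
    (lam : Option (Fin n) → ℝ) (hlam : ∀ a, 0 < lam a)
    (Q : Option (Fin n) → Option (Fin n) → Prop)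
    (hQirr : ∀ a, ¬ Q a a) (hQtrans : ∀ a b c, Q a b → Q b c → Q a c)
    (href : ∀ a b, liftRel P a b → Q a b) :
    (∫ t in {t : Option (Fin n) → ℝ | (∀ a, 0 < t a) ∧ ∀ a b, Q a b → t a < t b},
        ctcbnDensity (liftRel P) lam t) =
      (∏ a, lam a) *
        ∑ C ∈ maxChainsJ Q,
          ∏ k : Fin (n + 1), (rateSum lam (exitSet (liftRel P) (C k.castSucc)))⁻¹ :=
  stmt11_general P lam hlam Q hQirr href
end

section
/- Let P be a finite poset on [n], P_s = P ∪ {s}, λ ∈ ℝ^{{s}∪[n]}_{>0}, and Q a partial order on {s} ∪ [n] refining P_s. Define recursively, for S an order ideal of Q, P_S = Σ_{j ∈ S : S∖{j} ∈ J(Q)} (λ_j / λ_{Exit(S∖{j})}) · P_{S∖{j}} with initial condition P_∅ = 1, where Exit is taken with respect to P_s. Then P_{{s} ∪ [n]} = λ_s λ_1 ⋯ λ_n · Σ_{C ∈ 𝒞(J(Q))} ∏_{k=0}^{n} 1/λ_{Exit(C_k)}, i.e., the recursion computes the probability that a CT-CBN sample from P_s is compatible with Q. -/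
open MeasureTheory

open scoped Classical in
/-- The recursively defined quantities
`P_S = Σ_{j ∈ S : S∖{j} ∈ J(Q)} (λ_j / λ_{Exit(S∖{j})}) P_{S∖{j}}`, `P_∅ = 1`,
where `Exit` is taken with respect to the poset `R = P_s` and the ideals with respect to the
refinement `Q`. -/
noncomputable def Pval {n : ℕ} (R Q : Option (Fin n) → Option (Fin n) → Prop)
    (lam : Option (Fin n) → ℝ) (S : Finset (Option (Fin n))) : ℝ :=
  if S = ∅ then 1
  else ∑ j ∈ S.attach,
    if IsOrderIdeal Q (S.erase j.1) then
      (lam j.1 / rateSum lam (exitSet R (S.erase j.1))) * Pval R Q lam (S.erase j.1)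
    else 0
termination_by S.card
decreasing_by exact Finset.card_erase_lt_of_mem j.2

/-!
Unroll the recursion by induction on `|S|`. Every maximal chain `∅ = C_0 ⊂ ⋯ ⊂ C_m = S` of
`Q`-ideals ends in `S ∖ {j} ⊂ S` for exactly one `j ∈ S` with `S ∖ {j}` a `Q`-ideal. So splitting
the chains by their penultimate ideal reproduces the recursion for `P_S`, with the factors
`λ_j` collecting into `∏_{j ∈ S} λ_j`.
-/

open Finset

section IdealChains

variable {α : Type*} (Q : α → α → Prop)

def IsIdealChain {m : ℕ} (C : Fin (m + 1) → Finset α) : Prop :=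
  (∀ k, IsOrderIdeal Q (C k)) ∧ (∀ k : Fin (m + 1), (C k).card = (k : ℕ)) ∧
  (∀ k : Fin m, C k.castSucc ⊆ C k.succ)

variable {Q} in
theorem isIdealChain_snoc_iff {m : ℕ} {C : Fin (m + 1) → Finset α} {S : Finset α} :
    IsIdealChain Q (Fin.snoc C S : Fin (m + 2) → Finset α) ↔
      IsIdealChain Q C ∧ IsOrderIdeal Q S ∧ S.card = m + 1 ∧ C (Fin.last m) ⊆ S := by
  simp only [IsIdealChain, Fin.forall_fin_succ' (n := m + 1), Fin.forall_fin_succ' (n := m),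
    Fin.snoc_castSucc, Fin.snoc_last, Fin.val_castSucc, Fin.val_last, Fin.succ_castSucc,
    Fin.succ_last]
  tauto

variable [Fintype α]

open scoped Classical in
noncomputable def idealChainsTo (m : ℕ) (S : Finset α) : Finset (Fin (m + 1) → Finset α) :=
  univ.filter fun C => IsIdealChain Q C ∧ C (Fin.last m) = S

variable {Q}

theorem mem_idealChainsTo {m : ℕ} {S : Finset α} {C : Fin (m + 1) → Finset α} :
    C ∈ idealChainsTo Q m S ↔ IsIdealChain Q C ∧ C (Fin.last m) = S := by
  simp [idealChainsTo]

theorem isOrderIdeal_of_mem_idealChainsTo {m : ℕ} {S : Finset α} {C : Fin (m + 1) → Finset α}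
    (hC : C ∈ idealChainsTo Q m S) : IsOrderIdeal Q S := by
  obtain ⟨hchain, rfl⟩ := mem_idealChainsTo.mp hC
  exact hchain.1 _

theorem idealChainsTo_zero_empty : idealChainsTo Q 0 (∅ : Finset α) = {fun _ => ∅} := by
  ext C
  rw [mem_idealChainsTo, mem_singleton]
  constructor
  · rintro ⟨-, h⟩
    funext k
    rwa [show k = Fin.last 0 from Fin.ext (by omega)]
  · rintro rfl
    exact ⟨⟨fun _ _ _ _ h => absurd h (notMem_empty _), fun k => by rw [card_empty]; omega,
      fun k => k.elim0⟩, rfl⟩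

theorem snoc_init_of_mem_idealChainsTo {m : ℕ} {S : Finset α} {C : Fin (m + 2) → Finset α}
    (hC : C ∈ idealChainsTo Q (m + 1) S) : Fin.snoc (Fin.init C) S = C := by
  rw [← (mem_idealChainsTo.mp hC).2, Fin.snoc_init_self]

theorem sum_filter_penult_eq_sum_idealChainsTo [DecidableEq α] {M : Type*} [AddCommMonoid M]
    {m : ℕ} {S : Finset α} {j : α} (hS : IsOrderIdeal Q S) (hj : j ∈ S)
    (f : (Fin (m + 2) → Finset α) → M) :
    ∑ C ∈ idealChainsTo Q (m + 1) S with C (Fin.last m).castSucc = S.erase j, f C =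
      ∑ C ∈ idealChainsTo Q m (S.erase j), f (Fin.snoc C S) := by
  refine (sum_nbij' (fun C => (Fin.snoc C S : Fin (m + 2) → Finset α)) Fin.init
    ?_ ?_ ?_ ?_ fun _ _ => rfl).symm
  · intro C hC
    obtain ⟨hchain, hlast⟩ := mem_idealChainsTo.mp hC
    have hScard : S.card = m + 1 := by
      have := card_erase_of_mem hj
      rw [← hlast, hchain.2.1, Fin.val_last] at this
      have := card_pos.mpr ⟨j, hj⟩
      omega
    simp only [mem_filter, mem_idealChainsTo, isIdealChain_snoc_iff, Fin.snoc_last,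
      Fin.snoc_castSucc]
    exact ⟨⟨⟨hchain, hS, hScard, hlast ▸ erase_subset j S⟩, trivial⟩, hlast⟩
  · intro C hC
    obtain ⟨hC, hpenult⟩ := mem_filter.mp hC
    have hchain := (mem_idealChainsTo.mp hC).1
    rw [← snoc_init_of_mem_idealChainsTo hC] at hchain
    exact mem_idealChainsTo.mpr ⟨(isIdealChain_snoc_iff.mp hchain).1, hpenult⟩
  · intro C _
    exact Fin.init_snoc (α := fun _ => Finset α) S C
  · intro C hC
    exact snoc_init_of_mem_idealChainsTo (mem_filter.mp hC).1

theorem sum_idealChainsTo_succ [DecidableEq α] {M : Type*} [AddCommMonoid M] {m : ℕ}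
    {S : Finset α} (hS : IsOrderIdeal Q S) (f : (Fin (m + 2) → Finset α) → M) :
    ∑ C ∈ idealChainsTo Q (m + 1) S, f C =
      ∑ j ∈ S, ∑ C ∈ idealChainsTo Q m (S.erase j), f (Fin.snoc C S) := by
  have penult_mem : ∀ C ∈ idealChainsTo Q (m + 1) S,
      C (Fin.last m).castSucc ∈ S.image S.erase := by
    intro C hC
    have hchain := (mem_idealChainsTo.mp hC).1
    rw [← snoc_init_of_mem_idealChainsTo hC] at hchain
    obtain ⟨⟨-, hcard, -⟩, -, hScard, hsub⟩ := isIdealChain_snoc_iff.mp hchain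
    have hcovBy : Fin.init C (Fin.last m) ⋖ S := covBy_iff_exists_insert.mpr <|
      exists_eq_insert_iff.mpr ⟨hsub, by rw [hcard, hScard, Fin.val_last]⟩
    obtain ⟨j, hj, hjC⟩ := hcovBy.exists_finset_erase
    exact mem_image.mpr ⟨j, hj, hjC⟩
  rw [← sum_fiberwise_of_maps_to penult_mem, sum_image (erase_injOn S)]
  exact sum_congr rfl fun j hj => sum_filter_penult_eq_sum_idealChainsTo hS hj f

open scoped Classical in
theorem eq_prod_mul_sum_idealChainsTo [DecidableEq α] {R : Type*} [CommSemiring R]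
    (F : Finset α → R) (c : α → R) (w : Finset α → R) (h_empty : F ∅ = 1)
    (h_rec : ∀ S : Finset α, S.Nonempty → F S = ∑ j ∈ S,
      if IsOrderIdeal Q (S.erase j) then c j * w (S.erase j) * F (S.erase j) else 0)
    (m : ℕ) (S : Finset α) (hS : IsOrderIdeal Q S) (hcard : S.card = m) :
    F S = (∏ a ∈ S, c a) * ∑ C ∈ idealChainsTo Q m S, ∏ k : Fin m, w (C k.castSucc) := by
  induction m generalizing S with
  | zero =>
    rw [card_eq_zero.mp hcard, h_empty, idealChainsTo_zero_empty]
    simp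
  | succ m ih =>
    rw [h_rec S (card_pos.mp (by omega)), sum_idealChainsTo_succ hS, mul_sum]
    refine sum_congr rfl fun j hj => ?_
    have hcard_erase : (S.erase j).card = m := by
      rw [card_erase_of_mem hj]
      omega
    split_ifs with hideal
    · have hsplit : ∑ C ∈ idealChainsTo Q m (S.erase j),
            ∏ k : Fin (m + 1), w ((Fin.snoc C S : Fin (m + 2) → Finset α) k.castSucc) =
          w (S.erase j) * ∑ C ∈ idealChainsTo Q m (S.erase j), ∏ k : Fin m, w (C k.castSucc) := by
        rw [mul_sum]
        refine sum_congr rfl fun C hC => ?_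
        rw [Fin.prod_univ_castSucc]
        simp only [Fin.snoc_castSucc, (mem_idealChainsTo.mp hC).2]
        ring
      rw [hsplit, ih _ hideal hcard_erase, ← mul_prod_erase S c hj]
      ring
    · rw [sum_eq_zero fun C hC => absurd (isOrderIdeal_of_mem_idealChainsTo hC) hideal, mul_zero]

end IdealChains

open scoped Classical in
theorem Pval_eq_sum {n : ℕ} (R Q : Option (Fin n) → Option (Fin n) → Prop)
    (lam : Option (Fin n) → ℝ) {S : Finset (Option (Fin n))} (hS : S.Nonempty) :
    Pval R Q lam S = ∑ j ∈ S, if IsOrderIdeal Q (S.erase j) then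
      lam j * (rateSum lam (exitSet R (S.erase j)))⁻¹ * Pval R Q lam (S.erase j) else 0 := by
  rw [Pval, if_neg hS.ne_empty]
  simp_rw [div_eq_mul_inv]
  exact sum_attach S fun j => if IsOrderIdeal Q (S.erase j) then
    lam j * (rateSum lam (exitSet R (S.erase j)))⁻¹ * Pval R Q lam (S.erase j) else 0

theorem maxChainsJ_eq_idealChainsTo_univ {n : ℕ} (Q : Option (Fin n) → Option (Fin n) → Prop) :
    maxChainsJ Q = idealChainsTo Q (n + 1) univ := by
  ext C
  simp only [maxChainsJ, mem_filter, mem_univ, true_and, mem_idealChainsTo]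
  refine ⟨fun hC => ⟨hC, eq_univ_of_card _ ?_⟩, fun hC => hC.1⟩
  rw [hC.2.1, Fin.val_last, Fintype.card_option, Fintype.card_fin]

theorem stmt13_general {n : ℕ} (P : Fin n → Fin n → Prop)
    (lam : Option (Fin n) → ℝ)
    (Q : Option (Fin n) → Option (Fin n) → Prop) :
    Pval (liftRel P) Q lam Finset.univ =
      (∏ a, lam a) *
        ∑ C ∈ maxChainsJ Q,
          ∏ k : Fin (n + 1), (rateSum lam (exitSet (liftRel P) (C k.castSucc)))⁻¹ := by
  rw [maxChainsJ_eq_idealChainsTo_univ]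
  exact eq_prod_mul_sum_idealChainsTo _ lam (fun T => (rateSum lam (exitSet (liftRel P) T))⁻¹)
    (by rw [Pval, if_pos rfl]) (fun S hS => Pval_eq_sum _ _ _ hS) (n + 1) univ
    (fun _ _ _ _ => mem_univ _) (by simp)

/-- The recursion `P_S` computes the probability that a CT-CBN sample from `P_s` is
compatible with the refinement `Q`:
`P_{{s}∪[n]} = λ_s λ_1 ⋯ λ_n Σ_{C ∈ 𝒞(J(Q))} ∏_{k=0}^n 1/λ_{Exit(C_k)}`. -/
theorem stmt13 {n : ℕ} (P : Fin n → Fin n → Prop)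
    (hirr : ∀ i, ¬ P i i) (htrans : ∀ i j k, P i j → P j k → P i k)
    (lam : Option (Fin n) → ℝ) (hlam : ∀ a, 0 < lam a)
    (Q : Option (Fin n) → Option (Fin n) → Prop)
    (hQirr : ∀ a, ¬ Q a a) (hQtrans : ∀ a b c, Q a b → Q b c → Q a c)
    (href : ∀ a b, liftRel P a b → Q a b) :
    Pval (liftRel P) Q lam Finset.univ =
      (∏ a, lam a) *
        ∑ C ∈ maxChainsJ Q,
          ∏ k : Fin (n + 1), (rateSum lam (exitSet (liftRel P) (C k.castSucc)))⁻¹ :=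
  stmt13_general P lam Q
end
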